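/- arXiv:2203.15692 — 2 statements merged into one kernel-verified Lean document; each statement's English description precedes it below -/
import Mathlib

section
/- Let Z be a Zinbiel algebra, V a vector space, and Ω(Z,V) = (◁, ▷, ↼, ⇀, ω, ∗) an extending datum consisting of bilinear maps ◁: V×Z→V, ▷: Z×V→V, ⇀: V×Z→Z, ↼: Z×V→Z, ω: V×V→Z, ∗: V×V→V. Then the multiplication on Z⊕V defined by (x,u)∘(y,v) = (x·y + x↼v + u⇀y + ω(u,v), x▷v + u◁y + u∗v) satisfies the Zinbiel identity if and only if the twelve compatibility conditions (Z1)–(Z12) hold, where (Z1) asserts (V,◁,▷) is a Z-bimodule and (Z2)–(Z12) are: (Z2) (x↼v)·y + (x▷v)⇀y = x·(v⇀y + y↼v) + x↼(v◁y + y▷v); (Z3) (u⇀x)·y + (u◁x)⇀y = u⇀(x·y + y·x); (Z4) ω(u,v)·x + (u∗v)⇀x = u⇀(v⇀x + x↼v) + ω(u, v◁x + x▷v); (Z5) (u∗v)◁x = u◁(v⇀x + x↼v) + u∗(v◁x + x▷v); (Z6) (x·y)↼w = x·(y↼w + w⇀y) + x↼(y▷w + w◁y); (Z7) (x↼v)↼w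 + ω(x▷v, w) = x·(ω(v,w)+ω(w,v)) + x↼(v∗w + w∗v); (Z8) (x↼v)▷w + (x▷v)∗w = x▷(v∗w + w∗v); (Z9) (u⇀x)↼w + ω(u◁x, w) = u⇀(x↼w + w⇀x) + ω(u, w◁x + x▷w); (Z10) (u⇀x)▷w + (u◁x)∗w = u◁(x↼w + w⇀x) + u∗(x▷w + w◁x); (Z11) ω(u,v)↼w + ω(u∗v, w) = u⇀(ω(v,w)+ω(w,v)) + ω(u, v∗w + w∗v); (Z12) ω(u,v)▷w + (u∗v)∗w = u◁(ω(v,w)+ω(w,v)) + u∗(v∗w + w∗v). -/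
/-- The unified product multiplication on `Z ⊕ V` associated to an extending datum
`(◁ = tl, ▷ = tr, ↼ = pl, ⇀ = pr, ω, ∗ = st)`. -/
def uMul {k Z V : Type*} [CommRing k] [AddCommGroup Z] [Module k Z]
    [AddCommGroup V] [Module k V]
    (m : Z →ₗ[k] Z →ₗ[k] Z)
    (tl : V →ₗ[k] Z →ₗ[k] V) (tr : Z →ₗ[k] V →ₗ[k] V)
    (pl : Z →ₗ[k] V →ₗ[k] Z) (pr : V →ₗ[k] Z →ₗ[k] Z)
    (ω : V →ₗ[k] V →ₗ[k] Z) (st : V →ₗ[k] V →ₗ[k] V)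
    (a b : Z × V) : Z × V :=
  (m a.1 b.1 + pl a.1 b.2 + pr a.2 b.1 + ω a.2 b.2,
   tr a.1 b.2 + tl a.2 b.1 + st a.2 b.2)

/-- `Z ♮ V` is a unified product (i.e. satisfies the Zinbiel identity) iff the
compatibility conditions (Z1)–(Z12) hold. -/
theorem stmt2 {k Z V : Type*} [Field k] [CharZero k]
    [AddCommGroup Z] [Module k Z] [AddCommGroup V] [Module k V]
    (m : Z →ₗ[k] Z →ₗ[k] Z)
    (hZ : ∀ x y z : Z, m (m x y) z = m x (m y z + m z y))
    (tl : V →ₗ[k] Z →ₗ[k] V) (tr : Z →ₗ[k] V →ₗ[k] V)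
    (pl : Z →ₗ[k] V →ₗ[k] Z) (pr : V →ₗ[k] Z →ₗ[k] Z)
    (ω : V →ₗ[k] V →ₗ[k] Z) (st : V →ₗ[k] V →ₗ[k] V) :
    (∀ a b c : Z × V,
      uMul m tl tr pl pr ω st (uMul m tl tr pl pr ω st a b) c =
        uMul m tl tr pl pr ω st a
          (uMul m tl tr pl pr ω st b c + uMul m tl tr pl pr ω st c b)) ↔
    -- (Z1) : (V, ◁, ▷) is a Z-bimodule
    ((∀ (x y : Z) (w : V), tr (m x y) w = tr x (tr y w + tl w y)) ∧
     (∀ (x : Z) (v : V) (z : Z), tl (tr x v) z = tr x (tl v z + tr z v)) ∧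
     (∀ (u : V) (y z : Z), tl (tl u y) z = tl u (m y z + m z y)) ∧
     -- (Z2)
     (∀ (x : Z) (v : V) (y : Z),
       m (pl x v) y + pr (tr x v) y
         = m x (pr v y + pl y v) + pl x (tl v y + tr y v)) ∧
     -- (Z3)
     (∀ (u : V) (x y : Z),
       m (pr u x) y + pr (tl u x) y = pr u (m x y + m y x)) ∧
     -- (Z4)
     (∀ (u v : V) (x : Z),
       m (ω u v) x + pr (st u v) x
         = pr u (pr v x + pl x v) + ω u (tl v x + tr x v)) ∧
     -- (Z5)
     (∀ (u v : V) (x : Z),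
       tl (st u v) x = tl u (pr v x + pl x v) + st u (tl v x + tr x v)) ∧
     -- (Z6)
     (∀ (x y : Z) (w : V),
       pl (m x y) w = m x (pl y w + pr w y) + pl x (tr y w + tl w y)) ∧
     -- (Z7)
     (∀ (x : Z) (v w : V),
       pl (pl x v) w + ω (tr x v) w
         = m x (ω v w + ω w v) + pl x (st v w + st w v)) ∧
     -- (Z8)
     (∀ (x : Z) (v w : V),
       tr (pl x v) w + st (tr x v) w = tr x (st v w + st w v)) ∧
     -- (Z9)
     (∀ (u : V) (x : Z) (w : V),
       pl (pr u x) w + ω (tl u x) w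
         = pr u (pl x w + pr w x) + ω u (tl w x + tr x w)) ∧
     -- (Z10)
     (∀ (u : V) (x : Z) (w : V),
       tr (pr u x) w + st (tl u x) w
         = tl u (pl x w + pr w x) + st u (tr x w + tl w x)) ∧
     -- (Z11)
     (∀ u v w : V,
       pl (ω u v) w + ω (st u v) w
         = pr u (ω v w + ω w v) + ω u (st v w + st w v)) ∧
     -- (Z12)
     (∀ u v w : V,
       tr (ω u v) w + st (st u v) w
         = tl u (ω v w + ω w v) + st u (st v w + st w v))) := by
  
  constructor
  · intro h
    have key : ∀ a b c : Z × V,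
        (uMul m tl tr pl pr ω st (uMul m tl tr pl pr ω st a b) c).1 =
          (uMul m tl tr pl pr ω st a
            (uMul m tl tr pl pr ω st b c + uMul m tl tr pl pr ω st c b)).1 ∧
        (uMul m tl tr pl pr ω st (uMul m tl tr pl pr ω st a b) c).2 =
          (uMul m tl tr pl pr ω st a
            (uMul m tl tr pl pr ω st b c + uMul m tl tr pl pr ω st c b)).2 := by
      intro a b c
      rw [h a b c]; exact ⟨rfl, rfl⟩
    refine ⟨?_, ?_, ?_, ?_, ?_, ?_, ?_, ?_, ?_, ?_, ?_, ?_, ?_, ?_⟩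
    · intro x y w
      have H := (key (x,0) (y,0) (0,w)).2
      simp only [uMul, Prod.fst_add, Prod.snd_add, map_zero, LinearMap.zero_apply,
        map_add, LinearMap.add_apply, zero_add, add_zero] at H
      simp only [map_add]
      linear_combination (norm := module) H
    · intro x v z
      have H := (key (x,0) (0,v) (z,0)).2
      simp only [uMul, Prod.fst_add, Prod.snd_add, map_zero, LinearMap.zero_apply,
        map_add, LinearMap.add_apply, zero_add, add_zero] at H
      simp only [map_add]
      linear_combination (norm := module) H
    · intro u y z
      have H := (key (0,u) (y,0) (z,0)).2
      simp only [uMul, Prod.fst_add, Prod.snd_add, map_zero, LinearMap.zero_apply,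
        map_add, LinearMap.add_apply, zero_add, add_zero] at H
      simp only [map_add]
      linear_combination (norm := module) H
    · intro x v y
      have H := (key (x,0) (0,v) (y,0)).1
      simp only [uMul, Prod.fst_add, Prod.snd_add, map_zero, LinearMap.zero_apply,
        map_add, LinearMap.add_apply, zero_add, add_zero] at H
      simp only [map_add, LinearMap.add_apply]
      linear_combination (norm := module) H
    · intro u x y
      have H := (key (0,u) (x,0) (y,0)).1
      simp only [uMul, Prod.fst_add, Prod.snd_add, map_zero, LinearMap.zero_apply,
        map_add, LinearMap.add_apply, zero_add, add_zero] at H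
      simp only [map_add, LinearMap.add_apply]
      linear_combination (norm := module) H
    · intro u v x
      have H := (key (0,u) (0,v) (x,0)).1
      simp only [uMul, Prod.fst_add, Prod.snd_add, map_zero, LinearMap.zero_apply,
        map_add, LinearMap.add_apply, zero_add, add_zero] at H
      simp only [map_add, LinearMap.add_apply]
      linear_combination (norm := module) H
    · intro u v x
      have H := (key (0,u) (0,v) (x,0)).2
      simp only [uMul, Prod.fst_add, Prod.snd_add, map_zero, LinearMap.zero_apply,
        map_add, LinearMap.add_apply, zero_add, add_zero] at H
      simp only [map_add, LinearMap.add_apply]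
      linear_combination (norm := module) H
    · intro x y w
      have H := (key (x,0) (y,0) (0,w)).1
      simp only [uMul, Prod.fst_add, Prod.snd_add, map_zero, LinearMap.zero_apply,
        map_add, LinearMap.add_apply, zero_add, add_zero] at H
      simp only [map_add, LinearMap.add_apply]
      linear_combination (norm := module) H
    · intro x v w
      have H := (key (x,0) (0,v) (0,w)).1
      simp only [uMul, Prod.fst_add, Prod.snd_add, map_zero, LinearMap.zero_apply,
        map_add, LinearMap.add_apply, zero_add, add_zero] at H
      simp only [map_add, LinearMap.add_apply]
      linear_combination (norm := module) H
    · intro x v w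
      have H := (key (x,0) (0,v) (0,w)).2
      simp only [uMul, Prod.fst_add, Prod.snd_add, map_zero, LinearMap.zero_apply,
        map_add, LinearMap.add_apply, zero_add, add_zero] at H
      simp only [map_add, LinearMap.add_apply]
      linear_combination (norm := module) H
    · intro u x w
      have H := (key (0,u) (x,0) (0,w)).1
      simp only [uMul, Prod.fst_add, Prod.snd_add, map_zero, LinearMap.zero_apply,
        map_add, LinearMap.add_apply, zero_add, add_zero] at H
      simp only [map_add, LinearMap.add_apply]
      linear_combination (norm := module) H
    · intro u x w
      have H := (key (0,u) (x,0) (0,w)).2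
      simp only [uMul, Prod.fst_add, Prod.snd_add, map_zero, LinearMap.zero_apply,
        map_add, LinearMap.add_apply, zero_add, add_zero] at H
      simp only [map_add, LinearMap.add_apply]
      linear_combination (norm := module) H
    · intro u v w
      have H := (key (0,u) (0,v) (0,w)).1
      simp only [uMul, Prod.fst_add, Prod.snd_add, map_zero, LinearMap.zero_apply,
        map_add, LinearMap.add_apply, zero_add, add_zero] at H
      simp only [map_add, LinearMap.add_apply]
      linear_combination (norm := module) H
    · intro u v w
      have H := (key (0,u) (0,v) (0,w)).2
      simp only [uMul, Prod.fst_add, Prod.snd_add, map_zero, LinearMap.zero_apply,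
        map_add, LinearMap.add_apply, zero_add, add_zero] at H
      simp only [map_add, LinearMap.add_apply]
      linear_combination (norm := module) H
  · rintro ⟨h1a, h1b, h1c, h2, h3, h4, h5, h6, h7, h8, h9, h10, h11, h12⟩
    rintro ⟨x, u⟩ ⟨y, v⟩ ⟨z, w⟩
    have e0 := hZ x y z
    have e2 := h2 x v z
    have e3 := h3 u y z
    have e4 := h4 u v z
    have e6 := h6 x y w
    have e7 := h7 x v w
    have e9 := h9 u y w
    have e11 := h11 u v w
    have f1a := h1a x y w
    have f1b := h1b x v z
    have f1c := h1c u y z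
    have f5 := h5 u v z
    have f8 := h8 x v w
    have f10 := h10 u y w
    have f12 := h12 u v w
    simp only [map_add, LinearMap.add_apply] at e0 e2 e3 e4 e6 e7 e9 e11 f1a f1b f1c f5 f8 f10 f12
    have goal1 : (uMul m tl tr pl pr ω st (uMul m tl tr pl pr ω st (x,u) (y,v)) (z,w)).1 =
        (uMul m tl tr pl pr ω st (x,u)
          (uMul m tl tr pl pr ω st (y,v) (z,w) + uMul m tl tr pl pr ω st (z,w) (y,v))).1 := by
      simp only [uMul, Prod.fst_add, Prod.snd_add, map_add, LinearMap.add_apply]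
      set_option maxHeartbeats 2000000 in
      linear_combination (norm := abel) e0 + e2 + e3 + e4 + e6 + e7 + e9 + e11
    have goal2 : (uMul m tl tr pl pr ω st (uMul m tl tr pl pr ω st (x,u) (y,v)) (z,w)).2 =
        (uMul m tl tr pl pr ω st (x,u)
          (uMul m tl tr pl pr ω st (y,v) (z,w) + uMul m tl tr pl pr ω st (z,w) (y,v))).2 := by
      simp only [uMul, Prod.fst_add, Prod.snd_add, map_add, LinearMap.add_apply]
      set_option maxHeartbeats 2000000 in
      linear_combination (norm := abel) f1a + f1b + f1c + f5 + f8 + f10 + f12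
    exact Prod.ext goal1 goal2
end

section
/- Let Z♮V and Z♮'V be two unified products of a Zinbiel algebra Z with a vector space V, given by extending data (◁,▷,↼,⇀,ω,∗) and (◁',▷',↼',⇀',ω',∗'). For linear maps r: V→Z and s: V→V, the map ψ(x,u) = (x + r(u), s(u)) is a Zinbiel algebra homomorphism Z♮V → Z♮'V if and only if the following hold for all x∈Z, u,v∈V: (M1) s(x▷u) = x▷'s(u); (M2) s(u◁x) = s(u)◁'x; (M3) u⇀x + r(u◁x) = r(u)·x + s(u)⇀'x; (M4) x↼u + r(x▷u) = x·r(u) + x↼'s(u); (M5) s(u∗v) = r(u)▷'s(v) + s(u)◁'r(v) + s(u)∗'s(v); (M6) ω(u,v) + r(u∗v) = r(u)·r(v) + r(u)↼'s(v) + s(u)⇀'r(v) + ω'(s(u),s(v)). -/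
/-- `ψ(x,u) = (x + r(u), s(u))` is a homomorphism of unified products
`Z ♮ V → Z ♮' V` iff conditions (M1)–(M6) hold. -/
theorem stmt4 {k Z V : Type*} [Field k] [CharZero k]
    [AddCommGroup Z] [Module k Z] [AddCommGroup V] [Module k V]
    (m : Z →ₗ[k] Z →ₗ[k] Z)
    (hZ : ∀ x y z : Z, m (m x y) z = m x (m y z + m z y))
    (tl : V →ₗ[k] Z →ₗ[k] V) (tr : Z →ₗ[k] V →ₗ[k] V)
    (pl : Z →ₗ[k] V →ₗ[k] Z) (pr : V →ₗ[k] Z →ₗ[k] Z)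
    (ω : V →ₗ[k] V →ₗ[k] Z) (st : V →ₗ[k] V →ₗ[k] V)
    (tl' : V →ₗ[k] Z →ₗ[k] V) (tr' : Z →ₗ[k] V →ₗ[k] V)
    (pl' : Z →ₗ[k] V →ₗ[k] Z) (pr' : V →ₗ[k] Z →ₗ[k] Z)
    (ω' : V →ₗ[k] V →ₗ[k] Z) (st' : V →ₗ[k] V →ₗ[k] V)
    -- both are unified products, i.e. Zinbiel algebras
    (h : ∀ a b c : Z × V,
      uMul m tl tr pl pr ω st (uMul m tl tr pl pr ω st a b) c =
        uMul m tl tr pl pr ω st a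
          (uMul m tl tr pl pr ω st b c + uMul m tl tr pl pr ω st c b))
    (h' : ∀ a b c : Z × V,
      uMul m tl' tr' pl' pr' ω' st' (uMul m tl' tr' pl' pr' ω' st' a b) c =
        uMul m tl' tr' pl' pr' ω' st' a
          (uMul m tl' tr' pl' pr' ω' st' b c + uMul m tl' tr' pl' pr' ω' st' c b))
    (r : V →ₗ[k] Z) (s : V →ₗ[k] V) :
    (∀ a b : Z × V,
      (fun c : Z × V => ((c.1 + r c.2, s c.2) : Z × V)) (uMul m tl tr pl pr ω st a b)
        = uMul m tl' tr' pl' pr' ω' st'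
            ((a.1 + r a.2, s a.2)) ((b.1 + r b.2, s b.2))) ↔
    -- (M1)
    ((∀ (x : Z) (u : V), s (tr x u) = tr' x (s u)) ∧
     -- (M2)
     (∀ (u : V) (x : Z), s (tl u x) = tl' (s u) x) ∧
     -- (M3)
     (∀ (u : V) (x : Z), pr u x + r (tl u x) = m (r u) x + pr' (s u) x) ∧
     -- (M4)
     (∀ (x : Z) (u : V), pl x u + r (tr x u) = m x (r u) + pl' x (s u)) ∧
     -- (M5)
     (∀ u v : V, s (st u v) = tr' (r u) (s v) + tl' (s u) (r v) + st' (s u) (s v)) ∧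
     -- (M6)
     (∀ u v : V, ω u v + r (st u v)
        = m (r u) (r v) + pl' (r u) (s v) + pr' (s u) (r v) + ω' (s u) (s v))) := by

  constructor
  · intro H
    have key : ∀ a b : Z × V,
        ((uMul m tl tr pl pr ω st a b).1 + r (uMul m tl tr pl pr ω st a b).2,
          s (uMul m tl tr pl pr ω st a b).2)
          = uMul m tl' tr' pl' pr' ω' st' ((a.1 + r a.2, s a.2)) ((b.1 + r b.2, s b.2)) := by
      intro a b; exact H a b
    refine ⟨?_, ?_, ?_, ?_, ?_, ?_⟩
    · intro x u
      have := key (x, 0) (0, u)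
      simpa [uMul, Prod.ext_iff] using congrArg Prod.snd this
    · intro u x
      have := key (0, u) (x, 0)
      simpa [uMul, Prod.ext_iff] using congrArg Prod.snd this
    · intro u x
      have := key (0, u) (x, 0)
      simpa [uMul, Prod.ext_iff] using congrArg Prod.fst this
    · intro x u
      have := key (x, 0) (0, u)
      simpa [uMul, Prod.ext_iff] using congrArg Prod.fst this
    · intro u v
      have := key (0, u) (0, v)
      simpa [uMul, Prod.ext_iff, add_comm] using congrArg Prod.snd this
    · intro u v
      have := key (0, u) (0, v)
      simpa [uMul, Prod.ext_iff] using congrArg Prod.fst this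
  · rintro ⟨h1, h2, h3, h4, h5, h6⟩ ⟨x, u⟩ ⟨y, v⟩
    have e4 : r (tr x v) = m x (r v) + pl' x (s v) - pl x v := by
      rw [← h4 x v]; abel
    have e3 : r (tl u y) = m (r u) y + pr' (s u) y - pr u y := by
      rw [← h3 u y]; abel
    have e6 : r (st u v)
        = m (r u) (r v) + pl' (r u) (s v) + pr' (s u) (r v) + ω' (s u) (s v) - ω u v := by
      rw [← h6 u v]; abel
    simp only [uMul, map_add, Prod.mk.injEq, LinearMap.add_apply]
    constructor
    · rw [e4, e3, e6]; abel
    · rw [h1 x v, h2 u y, h5 u v]; abel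
end
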